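/- arXiv:2509.01329 — 5 statements merged into one kernel-verified Lean document; each statement's English description precedes it below -/
import Mathlib

section
/- For every g > 0, the quartic-oscillator partition function admits the explicit Laplace representation ∫_{ℝ} exp(−(x² + x⁴)/g) dx = ∫_0^∞ exp(−t/g) · √2 / ( √(√(1 + 4t) − 1) · √(1 + 4t) ) dt; that is, the Borel-plane density of Z at level t equals √2 / (√(√(1+4t) − 1)·√(1+4t)), which is singular exactly at t = 0, the unique critical value of V(x) = x² + x⁴. -/
open MeasureTheory Set Real

/-! The potential `V(x) = x² + x⁴` is even and maps `(0, ∞)` strictly increasingly onto itself,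
so `∫_ℝ f(V x) dx = 2 ∫_0^∞ f(V x) dx` and the substitution `t = V x` turns this into
`∫_0^∞ f(t) ρ(t) dt` with `ρ(V x) = 2 / V'(x)`. Since `1 + 4 V(x) = (1 + 2x²)²`, the inverse
branch is `x = √((√(1 + 4t) − 1)/2)`, and `2 / V'(x) = 1 / (x (1 + 2x²))` is the stated density. -/

noncomputable def quarticPotential (x : ℝ) : ℝ := x ^ 2 + x ^ 4

noncomputable def quarticBorelDensity (t : ℝ) : ℝ :=
  √2 / (√(√(1 + 4 * t) - 1) * √(1 + 4 * t))

namespace quarticPotential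

lemma abs_eq (x : ℝ) : quarticPotential |x| = quarticPotential x := by
  simp only [quarticPotential, (by decide : Even 2).pow_abs, (by decide : Even 4).pow_abs]

lemma hasDerivAt (x : ℝ) : HasDerivAt quarticPotential (2 * x + 4 * x ^ 3) x := by
  unfold quarticPotential
  exact ((hasDerivAt_pow 2 x).add (hasDerivAt_pow 4 x)).congr_deriv (by norm_num)

lemma strictMonoOn : StrictMonoOn quarticPotential (Ici 0) := fun _ hx _ _ hxy =>
  add_lt_add (pow_lt_pow_left₀ hxy hx two_ne_zero) (pow_lt_pow_left₀ hxy hx four_ne_zero)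

lemma sqrt_one_add_four_mul (x : ℝ) : √(1 + 4 * quarticPotential x) = 1 + 2 * x ^ 2 := by
  rw [quarticPotential, show 1 + 4 * (x ^ 2 + x ^ 4) = (1 + 2 * x ^ 2) ^ 2 by ring,
    sqrt_sq (by positivity)]

lemma image_Ioi : quarticPotential '' Ioi 0 = Ioi 0 := by
  ext t
  constructor
  · rintro ⟨x, hx, rfl⟩
    have : (0 : ℝ) < x := hx
    exact mem_Ioi.2 (by unfold quarticPotential; positivity)
  · intro (ht : 0 < t)
    set u := √(1 + 4 * t)
    have hu : 1 < u := lt_sqrt zero_le_one |>.2 (by linarith)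
    have hu2 : u ^ 2 = 1 + 4 * t := sq_sqrt (by linarith)
    have hx2 : √((u - 1) / 2) ^ 2 = (u - 1) / 2 := sq_sqrt (by linarith)
    refine ⟨√((u - 1) / 2), sqrt_pos.2 (by linarith), ?_⟩
    rw [quarticPotential, show (4 : ℕ) = 2 * 2 from rfl, pow_mul, hx2]
    nlinarith

lemma deriv_mul_quarticBorelDensity {x : ℝ} (hx : 0 < x) :
    (2 * x + 4 * x ^ 3) * quarticBorelDensity (quarticPotential x) = 2 := by
  have hsqrt : √(1 + 2 * x ^ 2 - 1) = √2 * x := by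
    rw [add_sub_cancel_left, sqrt_mul zero_le_two, sqrt_sq hx.le]
  rw [quarticBorelDensity, sqrt_one_add_four_mul, hsqrt]
  have : √2 ≠ 0 := by positivity
  field_simp
  ring

end quarticPotential

open quarticPotential in
theorem integral_comp_quarticPotential (f : ℝ → ℝ) :
    ∫ x, f (quarticPotential x) = ∫ t in Ioi 0, f t * quarticBorelDensity t := by
  have hinj : InjOn quarticPotential (Ioi 0) := strictMonoOn.injOn.mono Ioi_subset_Ici_self
  calc ∫ x, f (quarticPotential x)
      = 2 * ∫ x in Ioi 0, f (quarticPotential x) := by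
        simpa only [abs_eq] using integral_comp_abs (f := fun x => f (quarticPotential x))
    _ = ∫ x in Ioi 0, |2 * x + 4 * x ^ 3| • (f (quarticPotential x) *
          quarticBorelDensity (quarticPotential x)) := by
        rw [← integral_const_mul]
        refine setIntegral_congr_fun measurableSet_Ioi fun x (hx : 0 < x) => ?_
        rw [abs_of_pos (by positivity), smul_eq_mul, mul_left_comm,
          deriv_mul_quarticBorelDensity hx, mul_comm]
    _ = ∫ t in quarticPotential '' Ioi 0, f t * quarticBorelDensity t :=
        (integral_image_eq_integral_abs_deriv_smul measurableSet_Ioi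
          (fun x _ => (hasDerivAt x).hasDerivWithinAt) hinj fun t => f t * quarticBorelDensity t).symm
    _ = ∫ t in Ioi 0, f t * quarticBorelDensity t := by rw [image_Ioi]

theorem quartic_partition_laplace_representation_general (g : ℝ) :
    ∫ x : ℝ, Real.exp (-(x ^ 2 + x ^ 4) / g)
      = ∫ t in Ioi (0 : ℝ),
          Real.exp (-t / g) *
            (Real.sqrt 2 /
              (Real.sqrt (Real.sqrt (1 + 4 * t) - 1) * Real.sqrt (1 + 4 * t))) :=
  integral_comp_quarticPotential fun t => Real.exp (-t / g)

/-- Explicit Laplace (level-set) representation of the quartic-oscillator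
partition function: for every `g > 0`,
`∫_ℝ e^{−(x²+x⁴)/g} dx = ∫_0^∞ e^{−t/g} · √2/(√(√(1+4t)−1)·√(1+4t)) dt`;
the density `√2/(√(√(1+4t)−1)·√(1+4t))` is the Borel-plane density of `Z`
at level `t`, singular exactly at `t = 0`, the unique critical value of
`V(x) = x² + x⁴`. -/
theorem quartic_partition_laplace_representation (g : ℝ) (hg : 0 < g) :
    ∫ x : ℝ, Real.exp (-(x ^ 2 + x ^ 4) / g)
      = ∫ t in Ioi (0 : ℝ),
          Real.exp (-t / g) *
            (Real.sqrt 2 /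
              (Real.sqrt (Real.sqrt (1 + 4 * t) - 1) * Real.sqrt (1 + 4 * t))) :=
  quartic_partition_laplace_representation_general g
end

section
/- For every natural number N there exist constants C > 0 and g₀ > 0 such that for all 0 < g < g₀: | ∫_{ℝ} exp(−(x² + x⁴)/g) dx − √(πg) · Σ_{k=0}^{N−1} (−1)^k · (Γ(2k + 1/2)/(k!·Γ(1/2))) · g^k | ≤ C · g^{N + 1/2}. In other words, Z(g) ∼ √(πg)·Σ_k a_k g^k as g → 0⁺ with asymptotic coefficients a_k = (−1)^k Γ(2k+1/2)/(k! Γ(1/2)). -/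
/-!
Substituting `x = √g y` gives `Z(g) = √g ∫ e^{-g y⁴} e^{-y²} dy`. For `t ≥ 0` the Taylor
polynomial of `e^{-t}` of degree `N - 1` has remainder at most `t^N / N!`, so integrating the
expansion of `e^{-g y⁴}` against the Gaussian weight, whose moments are
`∫ y^{4k} e^{-y²} dy = Γ(2k + 1/2)`, yields the expansion with error at most
`Γ(2N + 1/2) / N! · g^{N + 1/2}`, for every `g > 0`.
-/

open MeasureTheory Set Real Finset

open scoped Nat

theorem hasDerivAt_pow_succ_div_factorial (n : ℕ) (x : ℝ) :
    HasDerivAt (fun x : ℝ => x ^ (n + 1) / (n + 1)!) (x ^ n / n !) x := by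
  refine ((hasDerivAt_pow (n + 1) x).div_const _).congr_deriv ?_
  rw [Nat.factorial_succ, Nat.add_sub_cancel]
  push_cast
  field_simp

theorem hasDerivAt_sum_range_pow_div_factorial (n : ℕ) (x : ℝ) :
    HasDerivAt (fun x : ℝ => ∑ k ∈ range (n + 1), x ^ k / k !)
      (∑ k ∈ range n, x ^ k / k !) x := by
  induction n with
  | zero => simpa using hasDerivAt_const x (1 : ℝ)
  | succ n ih =>
    simpa only [← sum_range_succ] using ih.fun_add (hasDerivAt_pow_succ_div_factorial n x)

theorem abs_exp_neg_sub_sum_le (N : ℕ) {t : ℝ} (ht : 0 ≤ t) :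
    |exp (-t) - ∑ k ∈ range N, (-t) ^ k / k !| ≤ t ^ N / N ! := by
  induction N generalizing t with
  | zero => simpa using exp_le_one_iff.mpr (neg_nonpos.mpr ht)
  | succ N ih =>
    set R : ℕ → ℝ → ℝ := fun n s => exp (-s) - ∑ k ∈ range n, (-s) ^ k / (k !)
    have hR : ∀ s, HasDerivAt (R (N + 1)) (-R N s) s := fun s => by
      refine ((hasDerivAt_neg s).exp.sub
        ((hasDerivAt_sum_range_pow_div_factorial N (-s)).comp s (hasDerivAt_neg s))).congr_deriv ?_
      simp only [R]
      ring
    have hR0 : R (N + 1) 0 = 0 := by simp [R, sum_range_succ']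
    refine image_norm_le_of_norm_deriv_right_le_deriv_boundary
      (fun s _ => (hR s).continuousAt.continuousWithinAt) (fun s _ => (hR s).hasDerivWithinAt)
      (by simp [hR0]) (hasDerivAt_pow_succ_div_factorial N) (fun s hs => ?_) ⟨ht, le_rfl⟩
    rw [norm_neg, Real.norm_eq_abs]
    exact ih hs.1

theorem abs_integral_exp_neg_mul_sub_sum_le {α : Type*} [MeasurableSpace α] {μ : Measure α}
    {u w : α → ℝ} (N : ℕ) (hu : ∀ x, 0 ≤ u x) (hw : ∀ x, 0 ≤ w x)
    (hum : AEStronglyMeasurable u μ) (hint : ∀ k ≤ N, Integrable (fun x => u x ^ k * w x) μ)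
    {g : ℝ} (hg : 0 ≤ g) :
    |∫ x, exp (-(g * u x)) * w x ∂μ - ∑ k ∈ range N, (-g) ^ k / k ! * ∫ x, u x ^ k * w x ∂μ|
      ≤ g ^ N / N ! * ∫ x, u x ^ N * w x ∂μ := by
  have hgu : ∀ x, 0 ≤ g * u x := fun x => mul_nonneg hg (hu x)
  have hw_int : Integrable w μ := by simpa using hint 0 N.zero_le
  have hint_exp : Integrable (fun x => exp (-(g * u x)) * w x) μ := by
    refine hw_int.mono' ((continuous_exp.comp_aestronglyMeasurable
      (hum.const_mul g).neg).mul hw_int.aestronglyMeasurable) (.of_forall fun x => ?_)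
    rw [norm_mul, Real.norm_of_nonneg (exp_pos _).le, Real.norm_of_nonneg (hw x)]
    exact mul_le_of_le_one_left (hw x) (exp_le_one_iff.mpr (neg_nonpos.mpr (hgu x)))
  have hint_term : ∀ k ∈ range N, Integrable (fun x => (-g) ^ k / k ! * (u x ^ k * w x)) μ :=
    fun k hk => (hint k (mem_range.mp hk).le).const_mul _
  have hpoly : ∀ x, (∑ k ∈ range N, (-(g * u x)) ^ k / k !) * w x
      = ∑ k ∈ range N, (-g) ^ k / k ! * (u x ^ k * w x) := fun x => by
    rw [sum_mul]
    congr! 1 with k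
    rw [neg_mul_eq_neg_mul, mul_pow]
    ring
  have hsum : ∑ k ∈ range N, (-g) ^ k / k ! * ∫ x, u x ^ k * w x ∂μ
      = ∫ x, (∑ k ∈ range N, (-(g * u x)) ^ k / k !) * w x ∂μ := by
    simp_rw [hpoly, ← integral_const_mul, integral_finsetSum _ hint_term]
  rw [hsum, ← integral_sub hint_exp
      ((integrable_finsetSum _ hint_term).congr (.of_forall fun x => (hpoly x).symm)),
    ← integral_const_mul, ← Real.norm_eq_abs]
  refine norm_integral_le_of_norm_le ((hint N le_rfl).const_mul _) (.of_forall fun x => ?_)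
  rw [← sub_mul, norm_mul, Real.norm_of_nonneg (hw x), Real.norm_eq_abs]
  calc |exp (-(g * u x)) - ∑ k ∈ range N, (-(g * u x)) ^ k / k !| * w x
      ≤ (g * u x) ^ N / N ! * w x :=
        mul_le_mul_of_nonneg_right (abs_exp_neg_sub_sum_le N (hgu x)) (hw x)
    _ = g ^ N / N ! * (u x ^ N * w x) := by ring

theorem integrable_pow_mul_exp_neg_sq (n : ℕ) :
    Integrable (fun y : ℝ => y ^ n * exp (-y ^ 2)) := by
  simpa [Real.rpow_natCast] using
    integrable_rpow_mul_exp_neg_mul_sq one_pos (neg_one_lt_zero.trans_le n.cast_nonneg)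

theorem integral_pow_two_mul_mul_exp_neg_sq (n : ℕ) :
    ∫ y : ℝ, y ^ (2 * n) * exp (-y ^ 2) = Gamma (n + 1 / 2) := by
  have heven : (fun y : ℝ => y ^ (2 * n) * exp (-y ^ 2))
      = fun y => |y| ^ (2 * n) * exp (-|y| ^ 2) := by
    simp only [pow_mul, sq_abs]
  calc ∫ y : ℝ, y ^ (2 * n) * exp (-y ^ 2)
      = 2 * ∫ y in Ioi (0 : ℝ), y ^ ((2 * n : ℕ) : ℝ) * exp (-y ^ (2 : ℝ)) := by
        rw [heven, integral_comp_abs (f := fun y => y ^ (2 * n) * exp (-y ^ 2))]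
        simp only [Real.rpow_natCast, Real.rpow_two]
    _ = Gamma (n + 1 / 2) := by
        rw [integral_rpow_mul_exp_neg_rpow two_pos (neg_one_lt_zero.trans_le (Nat.cast_nonneg _))]
        push_cast
        ring_nf

theorem integral_exp_neg_quadratic_add_quartic_div {g : ℝ} (hg : 0 < g) :
    ∫ x : ℝ, exp (-(x ^ 2 + x ^ 4) / g) = √g * ∫ y : ℝ, exp (-(g * y ^ 4)) * exp (-y ^ 2) := by
  have hsg : 0 < √g := sqrt_pos.mpr hg
  set f : ℝ → ℝ := fun x => exp (-(x ^ 2 + x ^ 4) / g)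
  have hf : ∀ y, f (√g * y) = exp (-(g * y ^ 4)) * exp (-y ^ 2) := fun y => by
    have h4 : √g ^ 4 = g ^ 2 := by rw [show 4 = 2 * 2 by rfl, pow_mul, sq_sqrt hg.le]
    simp only [f]
    rw [← exp_add, mul_pow, mul_pow, sq_sqrt hg.le, h4]
    congr 1
    field_simp
    ring
  calc ∫ x, f x = √g * (|(√g)⁻¹| • ∫ x, f x) := by
        rw [abs_of_pos (inv_pos.mpr hsg), smul_eq_mul, ← mul_assoc, mul_inv_cancel₀ hsg.ne',
          one_mul]
    _ = √g * ∫ y, exp (-(g * y ^ 4)) * exp (-y ^ 2) := by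
        simp_rw [← Measure.integral_comp_mul_left, hf]

theorem abs_integral_exp_neg_mul_pow_four_sub_sum_le (N : ℕ) {g : ℝ} (hg : 0 ≤ g) :
    |(∫ y : ℝ, exp (-(g * y ^ 4)) * exp (-y ^ 2)) -
        ∑ k ∈ range N, (-g) ^ k / k ! * Gamma (2 * k + 1 / 2)|
      ≤ g ^ N / N ! * Gamma (2 * N + 1 / 2) := by
  have hmoment : ∀ k : ℕ, ∫ y : ℝ, (y ^ 4) ^ k * exp (-y ^ 2) = Gamma (2 * k + 1 / 2) := fun k => by
    simp_rw [← pow_mul]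
    rw [show 4 * k = 2 * (2 * k) by ring, integral_pow_two_mul_mul_exp_neg_sq]
    push_cast
    rfl
  have h := abs_integral_exp_neg_mul_sub_sum_le (μ := volume)
    (u := fun y : ℝ => y ^ 4) (w := fun y => exp (-y ^ 2)) N (fun y => by positivity)
    (fun y => (exp_pos _).le) (by fun_prop)
    (fun k _ => by simpa only [← pow_mul] using integrable_pow_mul_exp_neg_sq (4 * k)) hg
  simpa only [hmoment] using h

/-- Asymptotic expansion of the quartic-oscillator partition function: for every
`N` there are `C > 0` and `g₀ > 0` such that for all `0 < g < g₀`,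
`|Z(g) − √(πg) Σ_{k<N} (−1)^k (Γ(2k+1/2)/(k! Γ(1/2))) g^k| ≤ C g^{N+1/2}`. -/
theorem quartic_partition_asymptotic_expansion (N : ℕ) :
    ∃ C > (0 : ℝ), ∃ g₀ > (0 : ℝ), ∀ g : ℝ, 0 < g → g < g₀ →
      |(∫ x : ℝ, Real.exp (-(x ^ 2 + x ^ 4) / g)) -
          Real.sqrt (Real.pi * g) *
            ∑ k ∈ Finset.range N,
              (-1 : ℝ) ^ k *
                (Real.Gamma (2 * k + 1 / 2) / (k.factorial * Real.Gamma (1 / 2))) * g ^ k|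
        ≤ C * g ^ ((N : ℝ) + 1 / 2) := by
  refine ⟨Gamma (2 * N + 1 / 2) / N !, by positivity, 1, one_pos, fun g hg _ => ?_⟩
  have hseries : √(π * g) * ∑ k ∈ range N,
        (-1 : ℝ) ^ k * (Gamma (2 * k + 1 / 2) / (k ! * Gamma (1 / 2))) * g ^ k
      = √g * ∑ k ∈ range N, (-g) ^ k / k ! * Gamma (2 * k + 1 / 2) := by
    rw [sqrt_mul pi_pos.le, Gamma_one_half_eq, mul_comm √π, mul_assoc, mul_sum]
    congr 1
    refine sum_congr rfl fun k _ => ?_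
    field_simp
    ring
  have hrpow : g ^ ((N : ℝ) + 1 / 2) = g ^ N * √g := by
    rw [rpow_add hg, rpow_natCast, ← sqrt_eq_rpow]
  rw [integral_exp_neg_quadratic_add_quartic_div hg, hseries, ← mul_sub, abs_mul,
    abs_of_nonneg (sqrt_nonneg g), hrpow]
  calc √g * |(∫ y : ℝ, exp (-(g * y ^ 4)) * exp (-y ^ 2)) -
          ∑ k ∈ range N, (-g) ^ k / k ! * Gamma (2 * k + 1 / 2)|
      ≤ √g * (g ^ N / N ! * Gamma (2 * N + 1 / 2)) :=
        mul_le_mul_of_nonneg_left (abs_integral_exp_neg_mul_pow_four_sub_sum_le N hg.le)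
          (sqrt_nonneg g)
    _ = Gamma (2 * N + 1 / 2) / N ! * (g ^ N * √g) := by ring
end

section
/- Fix g > 0. The lateral Borel–Laplace integrals around the Borel-plane singularity at ζ = 1 have an exponentially small discontinuity: lim_{ε→0⁺} ∫_0^∞ e^{−ζ/g} · ( 1/(1 − ζ − iε) − 1/(1 − ζ + iε) ) dζ = 2πi · e^{−1/g}, where the integral is a complex-valued Lebesgue integral over ζ ∈ (0,∞) and i is the imaginary unit. -/
/-!
The lateral difference `1/(x - iε) - 1/(x + iε) = 2iε / (x² + ε²)` is `2πi` times the Cauchy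
(Poisson) kernel of scale `ε`, an approximate identity as `ε → 0⁺`. Applied to `ζ ↦ e^{-ζ/g}`
restricted to `(0, ∞)`, which is integrable and continuous at `ζ = 1`, it yields `2πi e^{-1/g}`.
-/

open MeasureTheory Set Filter Complex ProbabilityTheory Bornology Topology
open scoped Real

theorem tendsto_norm_mul_cauchyPDFReal_cobounded :
    Tendsto (fun x : ℝ ↦ ‖x‖ ^ Module.finrank ℝ ℝ * cauchyPDFReal 0 1 x) (cobounded ℝ) (𝓝 0) := by
  have hnorm := tendsto_norm_cobounded_atTop (E := ℝ)
  have hinv : Tendsto (fun x : ℝ ↦ π⁻¹ * ‖x‖⁻¹) (cobounded ℝ) (𝓝 0) := by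
    simpa using hnorm.inv_tendsto_atTop.const_mul π⁻¹
  refine squeeze_zero' (Eventually.of_forall fun x ↦ ?_) ?_ hinv
  · simp only [cauchyPDFReal_def]; positivity
  filter_upwards [hnorm.eventually_gt_atTop 0] with x hx
  have key : ‖x‖ * (x ^ 2 + 1)⁻¹ ≤ ‖x‖⁻¹ := by
    rw [← sq_abs, ← Real.norm_eq_abs, ← div_eq_mul_inv, div_le_iff₀ (by positivity)]
    field_simp
    linarith
  simp only [cauchyPDFReal_def, Module.finrank_self, pow_one, sub_zero, NNReal.coe_one, one_pow,
    mul_one]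
  calc ‖x‖ * (π⁻¹ * (x ^ 2 + 1)⁻¹) = π⁻¹ * (‖x‖ * (x ^ 2 + 1)⁻¹) := by ring
    _ ≤ π⁻¹ * ‖x‖⁻¹ := by gcongr

/-- The rescaled standard Cauchy densities `ε⁻¹ φ((x₀ - x) / ε)` are peak functions at `x₀`. -/
theorem tendsto_integral_div_sq_add_sq_smul {E : Type*} [NormedAddCommGroup E]
    [NormedSpace ℝ E] [CompleteSpace E] {g : ℝ → E} {x₀ : ℝ} (hg : Integrable g)
    (hx₀ : ContinuousAt g x₀) :
    Tendsto (fun ε : ℝ ↦ ∫ x, (ε / ((x - x₀) ^ 2 + ε ^ 2)) • g x) (𝓝[>] 0) (𝓝 (π • g x₀)) := by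
  have peak := (tendsto_integral_comp_smul_smul_of_integrable' (μ := volume)
    (fun x ↦ (cauchyPDF_pos 0 one_ne_zero x).le) (integral_cauchyPDFReal_eq_one 0 one_ne_zero)
    tendsto_norm_mul_cauchyPDFReal_cobounded hg hx₀).comp tendsto_inv_nhdsGT_zero
  refine (peak.const_smul π).congr' ?_
  filter_upwards [self_mem_nhdsWithin] with ε (hε : 0 < ε)
  simp only [Function.comp_apply, ← integral_smul, smul_smul]
  congr 1 with x
  congr 1
  simp only [cauchyPDFReal_def, Module.finrank_self, pow_one, sub_zero, NNReal.coe_one, one_pow,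
    mul_one, smul_eq_mul]
  field_simp
  ring

/-- At `x = ε = 0` both sides vanish, by the convention `1 / 0 = 0`. -/
theorem one_div_sub_mul_I_sub_one_div_add_mul_I (x ε : ℝ) :
    1 / ((x : ℂ) - ε * I) - 1 / ((x : ℂ) + ε * I) = (2 * ε / (x ^ 2 + ε ^ 2) : ℝ) * I := by
  have hprod : ((x : ℂ) - ε * I) * ((x : ℂ) + ε * I) = ((x ^ 2 + ε ^ 2 : ℝ) : ℂ) := by
    push_cast
    linear_combination (-(ε : ℂ) ^ 2) * I_sq
  by_cases h : x ^ 2 + ε ^ 2 = 0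
  · obtain ⟨rfl, rfl⟩ : x = 0 ∧ ε = 0 := by constructor <;> nlinarith
    simp
  have h' : ((x : ℂ) - ε * I) * ((x : ℂ) + ε * I) ≠ 0 := by rw [hprod]; exact_mod_cast h
  rw [div_sub_div _ _ (left_ne_zero_of_mul h') (right_ne_zero_of_mul h'), hprod]
  push_cast
  ring

theorem integrableOn_cexp_neg_div_Ioi {g : ℝ} (hg : 0 < g) (c : ℝ) :
    IntegrableOn (fun x : ℝ ↦ cexp (-(x : ℂ) / g)) (Ioi c) := by
  have hre : (-(g : ℂ)⁻¹).re < 0 := by simpa using hg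
  simpa [neg_div, div_eq_inv_mul] using integrableOn_exp_mul_complex_Ioi hre c

/-- Stokes discontinuity of the lateral Borel–Laplace integrals across the
Borel singularity at `ζ = 1`: for `g > 0`,
`lim_{ε→0⁺} ∫_0^∞ e^{−ζ/g} (1/(1−ζ−iε) − 1/(1−ζ+iε)) dζ = 2πi e^{−1/g}`. -/
theorem stokes_discontinuity (g : ℝ) (hg : 0 < g) :
    Tendsto
      (fun ε : ℝ =>
        ∫ ζ in Ioi (0 : ℝ),
          Complex.exp (-(ζ : ℂ) / (g : ℂ)) *
            (1 / (1 - (ζ : ℂ) - (ε : ℂ) * Complex.I) -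
             1 / (1 - (ζ : ℂ) + (ε : ℂ) * Complex.I)))
      (nhdsWithin 0 (Ioi (0 : ℝ)))
      (nhds (2 * Real.pi * Complex.I * Complex.exp (-(1 : ℂ) / (g : ℂ)))) := by
  set G : ℝ → ℂ := (Ioi 0).indicator fun ζ ↦ 2 * I * cexp (-(ζ : ℂ) / g) with hG
  have hG_int : Integrable G :=
    IntegrableOn.integrable_indicator ((integrableOn_cexp_neg_div_Ioi hg 0).const_mul _)
      measurableSet_Ioi
  have hG_cont : ContinuousAt G 1 := by
    refine ContinuousAt.congr (f := fun ζ : ℝ ↦ 2 * I * cexp (-(ζ : ℂ) / g)) (by fun_prop) ?_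
    filter_upwards [Ioi_mem_nhds one_pos] with ζ hζ
    simp [G, hζ]
  convert tendsto_integral_div_sq_add_sq_smul hG_int hG_cont using 2 with ε
  · rw [hG, ← integral_indicator measurableSet_Ioi]
    congr 1 with ζ
    rw [← indicator_smul_apply _ fun ζ : ℝ ↦ ε / ((ζ - 1) ^ 2 + ε ^ 2)]
    congr 1 with ζ
    have lateral := one_div_sub_mul_I_sub_one_div_add_mul_I (1 - ζ) ε
    push_cast at lateral
    rw [lateral, real_smul, ofReal_div]
    push_cast
    ring
  · simp [hG, indicator_of_mem]
    ring
end

section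
/- Optimal truncation of a factorially divergent series yields exponentially small terms: for every g with 0 < g ≤ 1, setting N = ⌊1/g⌋, one has N! · g^N ≤ e² · g^{−1/2} · e^{−1/g}. -/
open Real

lemma fact_le_stir (n : ℕ) (hn : 1 ≤ n) :
    (n.factorial : ℝ) ≤ Real.exp 1 * Real.sqrt n * (n / Real.exp 1) ^ n := by
  have h1 : Stirling.stirlingSeq n ≤ Stirling.stirlingSeq 1 := by
    obtain ⟨m, rfl⟩ := Nat.exists_eq_add_of_le hn
    have := Stirling.stirlingSeq'_antitone (Nat.zero_le m)
    simpa [Function.comp, Nat.add_comm] using this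
  rw [Stirling.stirlingSeq_one] at h1
  have hpos : (0:ℝ) < Real.sqrt (2 * n) * (n / Real.exp 1) ^ n := by
    have : (0:ℝ) < (n:ℝ) := by exact_mod_cast hn
    positivity
  have h2 : (n.factorial : ℝ) ≤ Real.exp 1 / Real.sqrt 2 * (Real.sqrt (2 * n) * (n / Real.exp 1) ^ n) := by
    have := (div_le_iff₀ hpos).mp (by simpa [Stirling.stirlingSeq] using h1)
    linarith
  calc (n.factorial : ℝ) ≤ _ := h2
    _ = Real.exp 1 * Real.sqrt n * (n / Real.exp 1) ^ n := by
        rw [Real.sqrt_mul (by norm_num)]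
        field_simp [Real.sqrt_eq_zero']

/-- Optimal truncation of the factorially divergent series `Σ n! gⁿ` yields
exponentially small terms: for `0 < g ≤ 1` and `N = ⌊1/g⌋`,
`N! g^N ≤ e² g^{−1/2} e^{−1/g}`. -/
theorem optimal_truncation_exponentially_small (g : ℝ) (hg : 0 < g) (hg1 : g ≤ 1) :
    ((Nat.floor (1 / g)).factorial : ℝ) * g ^ (Nat.floor (1 / g))
      ≤ Real.exp 2 * g ^ (-(1 : ℝ) / 2) * Real.exp (-(1 / g)) := by
  set x := 1 / g with hxdef
  have hx1 : (1:ℝ) ≤ x := by rw [hxdef]; exact (le_div_iff₀ hg).mpr (by linarith)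
  set N := Nat.floor x with hN
  have hN1 : 1 ≤ N := Nat.le_floor (by exact_mod_cast hx1) -- guess
  have hNle : (N:ℝ) ≤ x := Nat.floor_le (by linarith)
  have hlt : x < N + 1 := Nat.lt_floor_add_one x
  have hNg : (N:ℝ) * g ≤ 1 := by
    rw [hxdef] at hNle
    calc (N:ℝ) * g ≤ (1/g) * g := by nlinarith
      _ = 1 := by field_simp
  have key : (N.factorial : ℝ) * g ^ N ≤ Real.exp 1 * Real.sqrt N * Real.exp (-(N:ℝ)) := by
    have h1 := fact_le_stir N hN1
    have h2 : ((N:ℝ) / Real.exp 1) ^ N * g ^ N ≤ ((1:ℝ) / Real.exp 1) ^ N := by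
      rw [← mul_pow]
      apply pow_le_pow_left₀ (by positivity)
      rw [div_mul_eq_mul_div]
      gcongr
    have h3 : ((1:ℝ) / Real.exp 1) ^ N = Real.exp (-(N:ℝ)) := by
      rw [one_div, ← Real.exp_neg, ← Real.exp_nat_mul]
      ring_nf
    calc (N.factorial : ℝ) * g ^ N
        ≤ (Real.exp 1 * Real.sqrt N * ((N:ℝ) / Real.exp 1) ^ N) * g ^ N := by
          apply mul_le_mul_of_nonneg_right h1 (by positivity)
      _ = Real.exp 1 * Real.sqrt N * (((N:ℝ) / Real.exp 1) ^ N * g ^ N) := by ring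
      _ ≤ Real.exp 1 * Real.sqrt N * ((1:ℝ) / Real.exp 1) ^ N := by
          apply mul_le_mul_of_nonneg_left h2 (by positivity)
      _ = Real.exp 1 * Real.sqrt N * Real.exp (-(N:ℝ)) := by rw [h3]
  have hsqrt : Real.sqrt N ≤ g ^ (-(1:ℝ)/2) := by
    have hsx : Real.sqrt N ≤ Real.sqrt x := Real.sqrt_le_sqrt hNle
    have : Real.sqrt x = g ^ (-(1:ℝ)/2) := by
      rw [hxdef, one_div, Real.sqrt_eq_rpow, ← Real.rpow_neg_one g, ← Real.rpow_mul hg.le]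
      norm_num
    linarith [hsx, this.le]
  have hexp : Real.exp (-(N:ℝ)) ≤ Real.exp 1 * Real.exp (-x) := by
    rw [← Real.exp_add]
    apply Real.exp_le_exp.mpr
    linarith
  calc (N.factorial : ℝ) * g ^ N ≤ Real.exp 1 * Real.sqrt N * Real.exp (-(N:ℝ)) := key
    _ ≤ Real.exp 1 * (g ^ (-(1:ℝ)/2)) * (Real.exp 1 * Real.exp (-x)) := by
        apply mul_le_mul
        · exact mul_le_mul_of_nonneg_left hsqrt (Real.exp_pos 1).le
        · exact hexp
        · positivity
        · positivity
    _ = Real.exp 2 * g ^ (-(1:ℝ)/2) * Real.exp (-x) := by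
        rw [show (2:ℝ) = 1 + 1 by norm_num, Real.exp_add]; ring
end

section
/- Watson-type Borel summation produces asymptotic expansions: let B : [0,∞) → ℝ be continuous with |B(t)| ≤ C·e^{K·t} for some constants C, K ≥ 0, and suppose there exist N ∈ ℕ, real coefficients b_0, …, b_{N−1}, and constants M, δ > 0 such that |B(t) − Σ_{n=0}^{N−1} b_n t^n| ≤ M·t^N for all t ∈ [0, δ]. Then there exist C' > 0 and g₀ > 0 such that for all 0 < g < g₀: | (1/g) ∫_0^∞ e^{−t/g} B(t) dt − Σ_{n=0}^{N−1} n! · b_n · g^n | ≤ C' · g^N. -/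
/-!
Subtracting the Taylor polynomial `P` leaves a remainder `R = B - P` with
`|R t| ≤ A t^N e^{κt}` on all of `[0, ∞)`: on `[0, δ]` this is the Taylor bound, and beyond `δ`
the exponential growth of `B` and `P` is absorbed by the factor `(t/δ)^N ≥ 1`. The moments
`(1/g) ∫ e^{-t/g} tⁿ dt = n! gⁿ` turn `P` into the truncated series exactly, while `R`
contributes at most `A N! / (g (1/g - κ)^{N+1}) ≤ A N! 2^{N+1} g^N` as soon as `2κg ≤ 1`.
-/

open MeasureTheory Set Real Finset
open scoped Nat

lemma integral_pow_mul_exp_neg_mul_Ioi (n : ℕ) {r : ℝ} (hr : 0 < r) :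
    ∫ t in Ioi (0 : ℝ), t ^ n * exp (-(r * t)) = n ! / r ^ (n + 1) := by
  have h := integral_rpow_mul_exp_neg_mul_Ioi (a := n + 1) (by positivity) hr
  rw [add_sub_cancel_right, Real.Gamma_nat_eq_factorial, ← Nat.cast_succ, rpow_natCast,
    one_div_pow] at h
  simpa only [rpow_natCast, div_mul_eq_mul_div, one_mul] using h

lemma integrableOn_pow_mul_exp_neg_mul_Ioi (n : ℕ) {r : ℝ} (hr : 0 < r) :
    IntegrableOn (fun t : ℝ => t ^ n * exp (-(r * t))) (Ioi 0) :=
  -- a non-integrable function has Bochner integral `0`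
  .of_integral_ne_zero (by rw [integral_pow_mul_exp_neg_mul_Ioi n hr]; positivity)

lemma exp_neg_div_mul_sum_pow (b : ℕ → ℝ) (N : ℕ) (g t : ℝ) :
    exp (-t / g) * ∑ n ∈ range N, b n * t ^ n =
      ∑ n ∈ range N, b n * (t ^ n * exp (-(g⁻¹ * t))) := by
  rw [neg_div, div_eq_inv_mul, mul_sum]
  exact sum_congr rfl fun n _ => by ring

lemma integrableOn_exp_neg_div_mul_sum_pow (b : ℕ → ℝ) (N : ℕ) {g : ℝ} (hg : 0 < g) :
    IntegrableOn (fun t => exp (-t / g) * ∑ n ∈ range N, b n * t ^ n) (Ioi 0) := by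
  simp_rw [exp_neg_div_mul_sum_pow]
  exact integrable_finsetSum _ fun n _ =>
    (integrableOn_pow_mul_exp_neg_mul_Ioi n (inv_pos.2 hg)).const_mul (b n)

lemma one_div_mul_integral_exp_neg_div_mul_sum_pow (b : ℕ → ℝ) (N : ℕ) {g : ℝ} (hg : 0 < g) :
    (1 / g) * ∫ t in Ioi (0 : ℝ), exp (-t / g) * ∑ n ∈ range N, b n * t ^ n =
      ∑ n ∈ range N, (n ! : ℝ) * b n * g ^ n := by
  simp_rw [exp_neg_div_mul_sum_pow]
  rw [integral_finsetSum _ fun n _ =>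
    (integrableOn_pow_mul_exp_neg_mul_Ioi n (inv_pos.2 hg)).const_mul (b n), mul_sum]
  refine sum_congr rfl fun n _ => ?_
  rw [integral_const_mul, integral_pow_mul_exp_neg_mul_Ioi n (inv_pos.2 hg), inv_pow,
    div_inv_eq_mul, pow_succ]
  field_simp

lemma abs_sum_pow_le_mul_exp (b : ℕ → ℝ) (N : ℕ) {t : ℝ} (ht : 0 ≤ t) :
    |∑ n ∈ range N, b n * t ^ n| ≤ (∑ n ∈ range N, |b n| * n !) * exp t := by
  rw [sum_mul]
  refine (abs_sum_le_sum_abs _ _).trans (sum_le_sum fun n _ => ?_)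
  rw [abs_mul, abs_pow, abs_of_nonneg ht, mul_assoc]
  gcongr
  exact (div_le_iff₀' (by positivity)).1 (pow_div_factorial_le_exp t ht n)

lemma abs_sub_sum_pow_le_mul_exp (b : ℕ → ℝ) (N : ℕ) {x C K t : ℝ} (hC : 0 ≤ C) (ht : 0 ≤ t)
    (hx : |x| ≤ C * exp (K * t)) :
    |x - ∑ n ∈ range N, b n * t ^ n| ≤
      (C + ∑ n ∈ range N, |b n| * n !) * exp (max K 1 * t) :=
  calc |x - ∑ n ∈ range N, b n * t ^ n| ≤ |x| + |∑ n ∈ range N, b n * t ^ n| := abs_sub _ _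
    _ ≤ C * exp (K * t) + (∑ n ∈ range N, |b n| * n !) * exp t :=
        add_le_add hx (abs_sum_pow_le_mul_exp b N ht)
    _ ≤ C * exp (max K 1 * t) + (∑ n ∈ range N, |b n| * n !) * exp (max K 1 * t) := by
        gcongr
        · exact le_max_left _ _
        · exact le_mul_of_one_le_left ht (le_max_right _ _)
    _ = (C + ∑ n ∈ range N, |b n| * n !) * exp (max K 1 * t) := by ring

lemma exists_abs_le_mul_pow_mul_exp {f : ℝ → ℝ} {N : ℕ} {C κ M δ : ℝ} (hκ : 0 ≤ κ) (hδ : 0 < δ)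
    (hgrowth : ∀ t ≥ δ, |f t| ≤ C * exp (κ * t)) (hlocal : ∀ t ∈ Icc 0 δ, |f t| ≤ M * t ^ N) :
    ∃ A > 0, ∀ t ≥ 0, |f t| ≤ A * (t ^ N * exp (κ * t)) := by
  refine ⟨max (max M (C / δ ^ N)) 1, by positivity, fun t ht => ?_⟩
  rcases le_or_gt t δ with htδ | hδt
  · calc |f t| ≤ M * t ^ N := hlocal t ⟨ht, htδ⟩
      _ ≤ M * t ^ N * exp (κ * t) :=
        le_mul_of_one_le_right ((abs_nonneg _).trans (hlocal t ⟨ht, htδ⟩))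
          (one_le_exp (by positivity))
      _ ≤ _ := by rw [mul_assoc]; gcongr; exact (le_max_left _ _).trans (le_max_left _ _)
  · calc |f t| ≤ C * exp (κ * t) := hgrowth t hδt.le
      _ ≤ C * exp (κ * t) * (t / δ) ^ N :=
        le_mul_of_one_le_right ((abs_nonneg _).trans (hgrowth t hδt.le))
          (one_le_pow₀ ((one_le_div hδ).2 hδt.le))
      _ = C / δ ^ N * (t ^ N * exp (κ * t)) := by rw [div_pow]; ring
      _ ≤ _ := by gcongr; exact (le_max_right _ _).trans (le_max_left _ _)

section Remainder

variable {f : ℝ → ℝ} {A κ g : ℝ} {N : ℕ}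

lemma norm_exp_neg_div_mul_le {t : ℝ} (hft : |f t| ≤ A * (t ^ N * exp (κ * t))) :
    ‖exp (-t / g) * f t‖ ≤ A * (t ^ N * exp (-((g⁻¹ - κ) * t))) :=
  calc ‖exp (-t / g) * f t‖ = exp (-t / g) * |f t| := by
        rw [norm_mul, norm_of_nonneg (exp_pos _).le, Real.norm_eq_abs]
    _ ≤ exp (-t / g) * (A * (t ^ N * exp (κ * t))) := by gcongr
    _ = A * (t ^ N * exp (-((g⁻¹ - κ) * t))) := by
        rw [mul_left_comm, mul_left_comm (exp _) (t ^ N), ← exp_add]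
        congr 3
        ring

lemma integrableOn_exp_neg_div_mul_of_abs_le
    (hf : AEStronglyMeasurable f (volume.restrict (Ioi 0)))
    (hbound : ∀ t > 0, |f t| ≤ A * (t ^ N * exp (κ * t))) (hg : 0 < g) (hκg : κ * g < 1) :
    IntegrableOn (fun t => exp (-t / g) * f t) (Ioi 0) := by
  have hr : 0 < g⁻¹ - κ := by
    rw [sub_pos, inv_eq_one_div, lt_div_iff₀ hg]
    exact hκg
  refine Integrable.mono' ((integrableOn_pow_mul_exp_neg_mul_Ioi N hr).const_mul A)
    ((continuous_exp.comp (continuous_neg.div_const g)).aestronglyMeasurable.mul hf) ?_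
  exact (ae_restrict_iff' measurableSet_Ioi).2
    (.of_forall fun t ht => norm_exp_neg_div_mul_le (hbound t ht))

lemma abs_one_div_mul_integral_exp_neg_div_mul_le
    (hbound : ∀ t > 0, |f t| ≤ A * (t ^ N * exp (κ * t))) (hg : 0 < g) (hκg : 2 * κ * g ≤ 1) :
    |(1 / g) * ∫ t in Ioi (0 : ℝ), exp (-t / g) * f t| ≤ A * N ! * 2 ^ (N + 1) * g ^ N := by
  have hA : 0 ≤ A :=
    nonneg_of_mul_nonneg_left ((abs_nonneg _).trans (hbound 1 one_pos)) (by positivity)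
  have hr : (2 * g)⁻¹ ≤ g⁻¹ - κ := by
    have hκ : κ ≤ (2 * g)⁻¹ := by
      rw [inv_eq_one_div, le_div_iff₀ (by positivity)]
      linarith
    have : g⁻¹ = 2 * (2 * g)⁻¹ := by field_simp
    linarith
  have hr₀ : 0 < g⁻¹ - κ := (inv_pos.2 (by positivity)).trans_le hr
  have hint : |∫ t in Ioi (0 : ℝ), exp (-t / g) * f t| ≤ A * (N ! / (g⁻¹ - κ) ^ (N + 1)) := by
    rw [← Real.norm_eq_abs, ← integral_pow_mul_exp_neg_mul_Ioi N hr₀, ← integral_const_mul]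
    exact norm_integral_le_of_norm_le ((integrableOn_pow_mul_exp_neg_mul_Ioi N hr₀).const_mul A)
      ((ae_restrict_iff' measurableSet_Ioi).2
        (.of_forall fun t ht => norm_exp_neg_div_mul_le (hbound t ht)))
  calc |(1 / g) * ∫ t in Ioi (0 : ℝ), exp (-t / g) * f t|
      ≤ (1 / g) * (A * (N ! / (g⁻¹ - κ) ^ (N + 1))) := by
        rw [abs_mul, abs_of_pos (by positivity)]
        gcongr
    _ ≤ (1 / g) * (A * (N ! / (2 * g)⁻¹ ^ (N + 1))) := by gcongr
    _ = A * N ! * 2 ^ (N + 1) * g ^ N := by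
        rw [inv_pow, div_inv_eq_mul, mul_pow, pow_succ g]
        field_simp

end Remainder

theorem watson_borel_summation_general
    (B : ℝ → ℝ) (hBcont : ContinuousOn B (Ici (0 : ℝ)))
    (C K : ℝ) (hC : 0 ≤ C)
    (hBgrowth : ∀ t : ℝ, 0 ≤ t → |B t| ≤ C * Real.exp (K * t))
    (N : ℕ) (b : ℕ → ℝ) (M δ : ℝ) (hδ : 0 < δ)
    (hBtaylor : ∀ t ∈ Icc (0 : ℝ) δ,
      |B t - ∑ n ∈ Finset.range N, b n * t ^ n| ≤ M * t ^ N) :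
    ∃ C' > (0 : ℝ), ∃ g₀ > (0 : ℝ), ∀ g : ℝ, 0 < g → g < g₀ →
      |(1 / g) * (∫ t in Ioi (0 : ℝ), Real.exp (-t / g) * B t) -
          ∑ n ∈ Finset.range N, (n.factorial : ℝ) * b n * g ^ n|
        ≤ C' * g ^ N := by
  set P : ℝ → ℝ := fun t => ∑ n ∈ range N, b n * t ^ n
  obtain ⟨A, hA, hR⟩ := exists_abs_le_mul_pow_mul_exp (f := fun t => B t - P t)
    (zero_le_one.trans (le_max_right K 1)) hδ
    (fun t ht => abs_sub_sum_pow_le_mul_exp b N hC (hδ.le.trans ht)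
      (hBgrowth t (hδ.le.trans ht))) hBtaylor
  refine ⟨A * N ! * 2 ^ (N + 1), by positivity, 1 / (2 * max K 1), by positivity,
    fun g hg hgg => ?_⟩
  have hκg : 2 * max K 1 * g ≤ 1 := by
    rw [lt_div_iff₀ (by positivity)] at hgg
    linarith
  have hRint : IntegrableOn (fun t => exp (-t / g) * (B t - P t)) (Ioi 0) :=
    integrableOn_exp_neg_div_mul_of_abs_le
      (((hBcont.sub (by fun_prop)).mono Ioi_subset_Ici_self).aestronglyMeasurable
        measurableSet_Ioi)
      (fun t ht => hR t ht.le) hg (by linarith)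
  have hPint := integrableOn_exp_neg_div_mul_sum_pow b N hg
  have hsplit : (∫ t in Ioi (0 : ℝ), exp (-t / g) * B t) =
      (∫ t in Ioi (0 : ℝ), exp (-t / g) * (B t - P t)) + ∫ t in Ioi 0, exp (-t / g) * P t := by
    rw [← integral_add hRint hPint]
    simp only [P, mul_sub, sub_add_cancel]
  rw [hsplit, mul_add, one_div_mul_integral_exp_neg_div_mul_sum_pow b N hg, add_sub_cancel_right]
  exact abs_one_div_mul_integral_exp_neg_div_mul_le (fun t ht => hR t ht.le) hg hκg

/-- Watson-type Borel summation produces asymptotic expansions: if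
`B : [0,∞) → ℝ` is continuous with `|B(t)| ≤ C e^{Kt}`, and
`|B(t) − Σ_{n<N} b_n tⁿ| ≤ M t^N` on `[0,δ]`, then there are `C' > 0`, `g₀ > 0`
with `|(1/g) ∫_0^∞ e^{−t/g} B(t) dt − Σ_{n<N} n! b_n gⁿ| ≤ C' g^N` for all
`0 < g < g₀`. -/
theorem watson_borel_summation
    (B : ℝ → ℝ) (hBcont : ContinuousOn B (Ici (0 : ℝ)))
    (C K : ℝ) (hC : 0 ≤ C) (hK : 0 ≤ K)
    (hBgrowth : ∀ t : ℝ, 0 ≤ t → |B t| ≤ C * Real.exp (K * t))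
    (N : ℕ) (b : ℕ → ℝ) (M δ : ℝ) (hM : 0 < M) (hδ : 0 < δ)
    (hBtaylor : ∀ t ∈ Icc (0 : ℝ) δ,
      |B t - ∑ n ∈ Finset.range N, b n * t ^ n| ≤ M * t ^ N) :
    ∃ C' > (0 : ℝ), ∃ g₀ > (0 : ℝ), ∀ g : ℝ, 0 < g → g < g₀ →
      |(1 / g) * (∫ t in Ioi (0 : ℝ), Real.exp (-t / g) * B t) -
          ∑ n ∈ Finset.range N, (n.factorial : ℝ) * b n * g ^ n|
        ≤ C' * g ^ N :=
  watson_borel_summation_general B hBcont C K hC hBgrowth N b M δ hδ hBtaylor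
end
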